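/- arXiv:2104.01597 — 6 statements merged into one kernel-verified Lean document; each statement's English description precedes it below -/
import Mathlib

section
/- Let a, δ > 0, 2 ≤ p < q + 2, and suppose S > 0 satisfies ‖u‖_{q+2} ≤ S ‖∇u‖_p for all u ∈ W_0^{1,p}(Ω). Set r(δ) = (δ a / S^{q+2})^{1/(q+2-p)}. If u ∈ W_0^{1,p}(Ω) satisfies 0 < ‖∇u‖_p < r(δ), then ∫_Ω |u|^{q+1} log|u| dx < δ a ‖∇u‖_p^p, and hence I_δ(u) := δ(a‖∇u‖_p^p + b‖∇u‖_p^{2p}) - ∫_Ω |u|^{q+1} log|u| dx > 0. -/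
open MeasureTheory

/-- If `0 < ‖∇u‖_p < r(δ) = (δa/S^{q+2})^{1/(q+2-p)}` (with `N = ‖∇u‖_p` and the
Sobolev inequality `‖u‖_{q+2} ≤ S N`), then `∫ |u|^{q+1} log|u| < δ a N^p` and
`I_δ(u) = δ(a N^p + b N^{2p}) - ∫ |u|^{q+1} log|u| > 0`. -/
theorem stmt_4 {α : Type*} [MeasurableSpace α] (μ : Measure α) (u : α → ℝ)
    (a b δ S p q N : ℝ) (ha : 0 < a) (hb : 0 < b) (hδ : 0 < δ) (hS : 0 < S)
    (hp : 2 ≤ p) (hpq : p < q + 2)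
    (hint : Integrable (fun x => |u x| ^ (q + 2)) μ)
    (hintlog : Integrable (fun x => |u x| ^ (q + 1) * Real.log |u x|) μ)
    (hSob : (∫ x, |u x| ^ (q + 2) ∂μ) ^ (1 / (q + 2)) ≤ S * N)
    (hNpos : 0 < N) (hNlt : N < (δ * a / S ^ (q + 2)) ^ (1 / (q + 2 - p))) :
    (∫ x, |u x| ^ (q + 1) * Real.log |u x| ∂μ) < δ * a * N ^ p ∧
    0 < δ * (a * N ^ p + b * N ^ (2 * p))
      - ∫ x, |u x| ^ (q + 1) * Real.log |u x| ∂μ := by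
  have hq2 : (0:ℝ) < q + 2 := by linarith
  have hqp : (0:ℝ) < q + 2 - p := by linarith
  have hSq : (0:ℝ) < S ^ (q + 2) := Real.rpow_pos_of_pos hS _
  have hR : (0:ℝ) < δ * a / S ^ (q + 2) := by positivity
  -- pointwise bound
  have hpt : ∀ x, |u x| ^ (q + 1) * Real.log |u x| ≤ |u x| ^ (q + 2) := by
    intro x
    rcases eq_or_lt_of_le (abs_nonneg (u x)) with h0 | h0
    · rw [← h0, Real.zero_rpow (by linarith : q + 1 ≠ 0),
        Real.zero_rpow (by linarith : q + 2 ≠ 0), zero_mul]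
    · have h1 : |u x| ^ (q + 2) = |u x| ^ (q + 1) * |u x| := by
        rw [← Real.rpow_add_one h0.ne' (q + 1)]; ring_nf
      rw [h1]
      have hlog : Real.log |u x| ≤ |u x| := by
        have := Real.log_le_sub_one_of_pos h0; linarith
      exact mul_le_mul_of_nonneg_left hlog (Real.rpow_nonneg (abs_nonneg _) _)
  have step1 : (∫ x, |u x| ^ (q + 1) * Real.log |u x| ∂μ)
      ≤ ∫ x, |u x| ^ (q + 2) ∂μ :=
    integral_mono hintlog hint hpt
  -- integral of |u|^{q+2} bounded
  have hA0 : (0:ℝ) ≤ ∫ x, |u x| ^ (q + 2) ∂μ :=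
    integral_nonneg fun x => Real.rpow_nonneg (abs_nonneg _) _
  have step2 : (∫ x, |u x| ^ (q + 2) ∂μ) ≤ (S * N) ^ (q + 2) := by
    have h := Real.rpow_le_rpow (Real.rpow_nonneg hA0 _) hSob hq2.le
    rwa [← Real.rpow_mul hA0, one_div_mul_cancel hq2.ne', Real.rpow_one] at h
  have step3 : (S * N) ^ (q + 2) = S ^ (q + 2) * (N ^ p * N ^ (q + 2 - p)) := by
    rw [Real.mul_rpow hS.le hNpos.le, ← Real.rpow_add hNpos]
    ring_nf
  have step5 : N ^ (q + 2 - p) < δ * a / S ^ (q + 2) := by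
    have h := Real.rpow_lt_rpow hNpos.le hNlt hqp
    rwa [← Real.rpow_mul hR.le, one_div_mul_cancel hqp.ne', Real.rpow_one] at h
  have hNp : (0:ℝ) < N ^ p := Real.rpow_pos_of_pos hNpos _
  have step6 : S ^ (q + 2) * (N ^ p * N ^ (q + 2 - p)) < δ * a * N ^ p := by
    have : S ^ (q + 2) * (N ^ p * N ^ (q + 2 - p))
        < S ^ (q + 2) * (N ^ p * (δ * a / S ^ (q + 2))) := by
      apply mul_lt_mul_of_pos_left _ hSq
      exact mul_lt_mul_of_pos_left step5 hNp
    calc S ^ (q + 2) * (N ^ p * N ^ (q + 2 - p))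
        < S ^ (q + 2) * (N ^ p * (δ * a / S ^ (q + 2))) := this
      _ = δ * a * N ^ p := by field_simp
  have main : (∫ x, |u x| ^ (q + 1) * Real.log |u x| ∂μ) < δ * a * N ^ p := by
    calc (∫ x, |u x| ^ (q + 1) * Real.log |u x| ∂μ)
        ≤ ∫ x, |u x| ^ (q + 2) ∂μ := step1
      _ ≤ (S * N) ^ (q + 2) := step2
      _ = S ^ (q + 2) * (N ^ p * N ^ (q + 2 - p)) := step3
      _ < δ * a * N ^ p := step6
  refine ⟨main, ?_⟩
  have hN2p : (0:ℝ) < N ^ (2 * p) := Real.rpow_pos_of_pos hNpos _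
  nlinarith [mul_pos hδ (mul_pos hb hN2p)]
end

section
/- Under the hypotheses of the previous lemma, if u ∈ W_0^{1,p}(Ω) satisfies I_δ(u) ≤ 0 and ‖∇u‖_p ≠ 0, then ‖∇u‖_p ≥ r(δ) = (δ a / S^{q+2})^{1/(q+2-p)}. -/
open MeasureTheory

/-- If `I_δ(u) ≤ 0` and `‖∇u‖_p = N ≠ 0`, then `N ≥ r(δ) = (δa/S^{q+2})^{1/(q+2-p)}`. -/
theorem stmt_5 {α : Type*} [MeasurableSpace α] (μ : Measure α) (u : α → ℝ)
    (a b δ S p q N : ℝ) (ha : 0 < a) (hb : 0 < b) (hδ : 0 < δ) (hS : 0 < S)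
    (hp : 2 ≤ p) (hpq : p < q + 2)
    (hint : Integrable (fun x => |u x| ^ (q + 2)) μ)
    (hintlog : Integrable (fun x => |u x| ^ (q + 1) * Real.log |u x|) μ)
    (hSob : (∫ x, |u x| ^ (q + 2) ∂μ) ^ (1 / (q + 2)) ≤ S * N)
    (hNnonneg : 0 ≤ N) (hNne : N ≠ 0)
    (hIδ : δ * (a * N ^ p + b * N ^ (2 * p))
      - (∫ x, |u x| ^ (q + 1) * Real.log |u x| ∂μ) ≤ 0) :
    (δ * a / S ^ (q + 2)) ^ (1 / (q + 2 - p)) ≤ N := by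
  have hN : 0 < N := lt_of_le_of_ne hNnonneg (Ne.symm hNne)
  have hq2 : (0:ℝ) < q + 2 := by linarith
  have hqp : (0:ℝ) < q + 2 - p := by linarith
  -- pointwise bound
  have hpt : ∀ x, |u x| ^ (q + 1) * Real.log |u x| ≤ |u x| ^ (q + 2) := by
    intro x
    rcases eq_or_lt_of_le (abs_nonneg (u x)) with h0 | h0
    · rw [← h0, Real.log_zero, mul_zero]
      exact Real.rpow_nonneg le_rfl _
    · have h1 : Real.log |u x| ≤ |u x| :=
        (Real.log_le_sub_one_of_pos h0).trans (by linarith)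
      calc |u x| ^ (q+1) * Real.log |u x| ≤ |u x| ^ (q+1) * |u x| :=
            mul_le_mul_of_nonneg_left h1 (Real.rpow_nonneg h0.le _)
        _ = |u x| ^ (q+2) := by
            rw [← Real.rpow_add_one h0.ne' (q+1), show q+1+1 = q+2 by ring]
  set A := ∫ x, |u x| ^ (q + 2) ∂μ with hA
  have hAnn : 0 ≤ A :=
    integral_nonneg fun x => Real.rpow_nonneg (abs_nonneg _) _
  have hlogA : (∫ x, |u x| ^ (q + 1) * Real.log |u x| ∂μ) ≤ A :=
    integral_mono hintlog hint hpt
  have hA2 : A ≤ (S * N) ^ (q + 2) := by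
    have h := Real.rpow_le_rpow (Real.rpow_nonneg hAnn _) hSob hq2.le
    rwa [← Real.rpow_mul hAnn, one_div, inv_mul_cancel₀ hq2.ne', Real.rpow_one] at h
  have hmul : (S * N) ^ (q + 2) = S ^ (q + 2) * N ^ (q + 2) :=
    Real.mul_rpow hS.le hNnonneg
  have hbN : 0 ≤ b * N ^ (2 * p) :=
    mul_nonneg hb.le (Real.rpow_nonneg hNnonneg _)
  have hchain : δ * a * N ^ p ≤ S ^ (q + 2) * N ^ (q + 2) := by
    nlinarith [hlogA, hA2, hmul, hδ.le]
  have hSp : (0:ℝ) < S ^ (q + 2) := Real.rpow_pos_of_pos hS _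
  have hNp : (0:ℝ) < N ^ p := Real.rpow_pos_of_pos hN _
  have hkey : δ * a / S ^ (q + 2) ≤ N ^ (q + 2 - p) := by
    rw [Real.rpow_sub hN, div_le_div_iff₀ hSp hNp]
    nlinarith [hchain]
  have h := Real.rpow_le_rpow (by positivity) hkey (le_of_lt (by positivity : (0:ℝ) < 1 / (q + 2 - p)))
  rwa [← Real.rpow_mul hNnonneg, one_div, mul_inv_cancel₀ hqp.ne', Real.rpow_one, ← one_div] at h
end

section
/- Suppose y : [T₁, T₂] → ℝ is twice differentiable, y(T₁) > 0, y'(T₁) < 0, and y''(t) ≤ -C y(t)^β for all t ∈ [T₁, T₂], where C > 0 and β > 1. Then y cannot remain positive on all of [T₁, ∞); i.e., there exists T ∈ (T₁, ∞) with lim_{t→T⁻} y(t) = 0, provided the solution is extended while positive. -/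
/-- ODE blow-up comparison: if `y(T₁) > 0`, `y'(T₁) < 0` and `y'' ≤ -C y^β`
(while `y > 0`) with `C > 0`, `β > 1`, then `y` cannot remain positive on `[T₁, ∞)`. -/
theorem stmt_7 (y : ℝ → ℝ) (T₁ C β : ℝ) (hC : 0 < C) (hβ : 1 < β)
    (hdiff : ∀ t ∈ Set.Ici T₁, DifferentiableAt ℝ y t ∧ DifferentiableAt ℝ (deriv y) t)
    (h0 : 0 < y T₁) (h0' : deriv y T₁ < 0)
    (hineq : ∀ t ∈ Set.Ici T₁, 0 < y t → deriv (deriv y) t ≤ -C * y t ^ β) :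
    ¬ (∀ t ∈ Set.Ici T₁, 0 < y t) := by
  intro hpos
  -- deriv y is antitone on [T₁, ∞)
  have hcont' : ContinuousOn (deriv y) (Set.Ici T₁) :=
    fun t ht => ((hdiff t ht).2.continuousAt).continuousWithinAt
  have hanti : AntitoneOn (deriv y) (Set.Ici T₁) := by
    apply antitoneOn_of_deriv_nonpos (convex_Ici T₁) hcont'
    · intro x hx
      rw [interior_Ici] at hx
      exact ((hdiff x (Set.Ioi_subset_Ici_self hx)).2).differentiableWithinAt
    · intro x hx
      rw [interior_Ici] at hx
      have hx' : x ∈ Set.Ici T₁ := Set.Ioi_subset_Ici_self hx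
      have := hineq x hx' (hpos x hx')
      have hyp : 0 < y x ^ β := Real.rpow_pos_of_pos (hpos x hx') β
      nlinarith
  -- linear upper bound for y
  set c := deriv y T₁ with hc
  have hg : AntitoneOn (fun t => y t - c * t) (Set.Ici T₁) := by
    apply antitoneOn_of_deriv_nonpos (convex_Ici T₁)
    · exact fun t ht => (((hdiff t ht).1.sub ((differentiable_id.const_mul c) t)).continuousAt).continuousWithinAt
    · intro x hx
      rw [interior_Ici] at hx
      exact (((hdiff x (Set.Ioi_subset_Ici_self hx)).1.sub ((differentiable_id.const_mul c) x))).differentiableWithinAt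
    · intro x hx
      rw [interior_Ici] at hx
      have hx' : x ∈ Set.Ici T₁ := Set.Ioi_subset_Ici_self hx
      have hd : deriv (fun t => y t - c * t) x = deriv y x - c := by
        have := (((hdiff x hx').1.hasDerivAt).sub ((hasDerivAt_id x).const_mul c)).deriv
        exact this.trans (by simp)
      rw [hd]
      have := hanti (Set.self_mem_Ici) hx' (le_of_lt (Set.mem_Ioi.mp hx))
      linarith
  -- evaluate at a large time
  set t₂ := T₁ + (y T₁ + 1) / (-c) with ht₂
  have hcneg : 0 < -c := by linarith
  have ht₂mem : t₂ ∈ Set.Ici T₁ := by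
    have : 0 < (y T₁ + 1) / (-c) := div_pos (by linarith) hcneg
    simp only [Set.mem_Ici, ht₂]; linarith
  have hb := hg Set.self_mem_Ici ht₂mem ht₂mem
  have hct : c * (t₂ - T₁) = -(y T₁ + 1) := by
    have : t₂ - T₁ = (y T₁ + 1) / (-c) := by rw [ht₂]; ring
    rw [this]
    field_simp
    rw [div_self (ne_of_lt h0')]
  have hyt₂ : y t₂ ≤ -1 := by
    have : y t₂ - c * t₂ ≤ y T₁ - c * T₁ := hb
    nlinarith [hct]
  have := hpos t₂ ht₂mem
  linarith
end

section
/- Let θ, η : [0, T) → ℝ be differentiable with θ(0) > 0, η(0) > 0, θ'(t) ≥ (q+1) η(t) > 0 and θ(t) η'(t) ≥ ((q+1)/2) θ'(t) η(t) for all t, where q > 1. Then the function t ↦ η(t) θ(t)^{-(q+1)/2} is nondecreasing, and θ^{(1-q)/2}(t) ≤ θ^{(1-q)/2}(0) - ((q²-1)/2) θ^{-(q+1)/2}(0) η(0) t. Consequently θ blows up in finite time T ≤ 2θ(0) / ((q²-1) η(0)). -/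
/-- Abstract life-span lemma: with `θ(0) > 0`, `η(0) > 0`,
`θ' ≥ (q+1) η > 0` and `θ η' ≥ ((q+1)/2) θ' η` on `[0,T)`, `q > 1`, the function
`t ↦ η θ^{-(q+1)/2}` is monotone nondecreasing,
`θ^{(1-q)/2}(t) ≤ θ^{(1-q)/2}(0) - ((q²-1)/2) θ^{-(q+1)/2}(0) η(0) t`, and
`T ≤ 2 θ(0) / ((q²-1) η(0))`. -/
theorem stmt_11 (θ η : ℝ → ℝ) (T q : ℝ) (hq : 1 < q) (hT : 0 < T)
    (hθdiff : ∀ t ∈ Set.Ico (0 : ℝ) T, DifferentiableAt ℝ θ t)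
    (hηdiff : ∀ t ∈ Set.Ico (0 : ℝ) T, DifferentiableAt ℝ η t)
    (hθ0 : 0 < θ 0) (hη0 : 0 < η 0)
    (hθpos : ∀ t ∈ Set.Ico (0 : ℝ) T, 0 < θ t)
    (hηpos : ∀ t ∈ Set.Ico (0 : ℝ) T, 0 < η t)
    (h1 : ∀ t ∈ Set.Ico (0 : ℝ) T, (q + 1) * η t ≤ deriv θ t)
    (h2 : ∀ t ∈ Set.Ico (0 : ℝ) T, (q + 1) / 2 * deriv θ t * η t ≤ θ t * deriv η t) :
    MonotoneOn (fun t => η t * θ t ^ (-((q + 1) / 2))) (Set.Ico (0 : ℝ) T) ∧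
    (∀ t ∈ Set.Ico (0 : ℝ) T,
      θ t ^ ((1 - q) / 2) ≤ θ 0 ^ ((1 - q) / 2)
        - (q ^ 2 - 1) / 2 * θ 0 ^ (-((q + 1) / 2)) * η 0 * t) ∧
    T ≤ 2 * θ 0 / ((q ^ 2 - 1) * η 0) := by
  set p : ℝ := (q + 1) / 2 with hp
  set r : ℝ := (1 - q) / 2 with hr
  have hint : interior (Set.Ico (0:ℝ) T) = Set.Ioo 0 T := interior_Ico
  have hsub : Set.Ioo (0:ℝ) T ⊆ Set.Ico 0 T := Set.Ioo_subset_Ico_self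
  -- derivative of f = η * θ^{-p}
  have hf : ∀ t ∈ Set.Ico (0:ℝ) T, HasDerivAt (fun t => η t * θ t ^ (-p))
      (deriv η t * θ t ^ (-p) + η t * (deriv θ t * (-p) * θ t ^ (-p - 1))) t := by
    intro t ht
    have hθ := (hθdiff t ht).hasDerivAt
    have hη := (hηdiff t ht).hasDerivAt
    exact hη.mul (hθ.rpow_const (Or.inl (hθpos t ht).ne'))
  have hfnn : ∀ t ∈ Set.Ico (0:ℝ) T,
      0 ≤ deriv η t * θ t ^ (-p) + η t * (deriv θ t * (-p) * θ t ^ (-p - 1)) := by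
    intro t ht
    have hθt := hθpos t ht
    have h2t := h2 t ht
    have e0 : (-p - 1) + 1 = -p := by ring
    have e1 : θ t ^ (-p) = θ t ^ (-p - 1) * θ t := by
      rw [← Real.rpow_add_one hθt.ne' (-p - 1), e0]
    have hpow : 0 < θ t ^ (-p - 1) := Real.rpow_pos_of_pos hθt _
    rw [e1]
    rw [hp] at *
    nlinarith [mul_le_mul_of_nonneg_left h2t hpow.le]
  have mono : MonotoneOn (fun t => η t * θ t ^ (-p)) (Set.Ico (0:ℝ) T) := by
    apply monotoneOn_of_deriv_nonneg (convex_Ico 0 T)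
    · intro t ht
      exact ((hf t ht).continuousAt).continuousWithinAt
    · intro t ht
      rw [hint] at ht
      exact ((hf t (hsub ht)).differentiableAt).differentiableWithinAt
    · intro t ht
      rw [hint] at ht
      rw [(hf t (hsub ht)).deriv]
      exact hfnn t (hsub ht)
  set c : ℝ := (q ^ 2 - 1) / 2 * θ 0 ^ (-p) * η 0 with hc
  have h1q : 0 < q ^ 2 - 1 := by nlinarith
  have hcpos : 0 < c := by
    have hpow := Real.rpow_pos_of_pos hθ0 (-p)
    rw [hc]; positivity
  -- derivative of g = θ^r + c t
  have hg : ∀ t ∈ Set.Ico (0:ℝ) T, HasDerivAt (fun t => θ t ^ r + c * t)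
      (deriv θ t * r * θ t ^ (r - 1) + c) t := by
    intro t ht
    have hθ := (hθdiff t ht).hasDerivAt
    have ha : HasDerivAt (fun t => θ t ^ r) (deriv θ t * r * θ t ^ (r - 1)) t :=
      hθ.rpow_const (Or.inl (hθpos t ht).ne')
    have hb : HasDerivAt (fun t => c * t) c t := by
      simpa using (hasDerivAt_id t).const_mul c
    exact ha.add hb
  have hgnp : ∀ t ∈ Set.Ico (0:ℝ) T, deriv θ t * r * θ t ^ (r - 1) + c ≤ 0 := by
    intro t ht
    have hθt := hθpos t ht
    have hηt := hηpos t ht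
    have h1t := h1 t ht
    have e1 : r - 1 = -p := by rw [hr, hp]; ring
    have hpow : 0 < θ t ^ (r - 1) := Real.rpow_pos_of_pos hθt _
    have hmono := mono (Set.left_mem_Ico.2 hT) ht ht.1
    simp only at hmono
    have hrneg : r < 0 := by rw [hr]; linarith
    have step1 : deriv θ t * r ≤ (q + 1) * η t * r :=
      mul_le_mul_of_nonpos_right h1t hrneg.le
    have step2 : deriv θ t * r * θ t ^ (r - 1) ≤ (q + 1) * η t * r * θ t ^ (r - 1) :=
      mul_le_mul_of_nonneg_right step1 hpow.le
    have e2 : (q + 1) * η t * r * θ t ^ (r - 1) = -((q^2-1)/2) * (η t * θ t ^ (-p)) := by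
      rw [e1, hr]; ring
    rw [e2] at step2
    have hm : η 0 * θ 0 ^ (-p) ≤ η t * θ t ^ (-p) := hmono
    rw [hc] at *
    nlinarith [hm, step2]
  have anti : AntitoneOn (fun t => θ t ^ r + c * t) (Set.Ico (0:ℝ) T) := by
    apply antitoneOn_of_deriv_nonpos (convex_Ico 0 T)
    · intro t ht
      exact ((hg t ht).continuousAt).continuousWithinAt
    · intro t ht
      rw [hint] at ht
      exact ((hg t (hsub ht)).differentiableAt).differentiableWithinAt
    · intro t ht
      rw [hint] at ht
      rw [(hg t (hsub ht)).deriv]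
      exact hgnp t (hsub ht)
  have part2 : ∀ t ∈ Set.Ico (0:ℝ) T, θ t ^ r ≤ θ 0 ^ r - c * t := by
    intro t ht
    have := anti (Set.left_mem_Ico.2 hT) ht ht.1
    simp only [mul_zero, add_zero] at this
    linarith
  refine ⟨mono, ?_, ?_⟩
  · intro t ht
    exact part2 t ht
  · by_contra hcon
    push_neg at hcon
    set t0 : ℝ := 2 * θ 0 / ((q ^ 2 - 1) * η 0) with ht0
    have ht0pos : 0 < t0 := by rw [ht0]; positivity
    have ht0mem : t0 ∈ Set.Ico (0:ℝ) T := ⟨ht0pos.le, hcon⟩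
    have hle := part2 t0 ht0mem
    have hgt : 0 < θ t0 ^ r := Real.rpow_pos_of_pos (hθpos t0 ht0mem) _
    have key : c * t0 = θ 0 ^ r := by
      rw [hc, ht0]
      have hrp : θ 0 ^ (-p) * θ 0 = θ 0 ^ r := by
        rw [← Real.rpow_add_one hθ0.ne' (-p)]
        congr 1
        rw [hp, hr]; ring
      field_simp
      rw [← hrp]
    linarith
end

section
/- Let u ∈ W_0^{1,p}(Ω) with 0 < J(u) < d, and let δ₁ < 1 < δ₂ be the two roots of d(δ) = J(u), where d(δ) = inf{J(v) : v ∈ 𝒩_δ} satisfies: d(δ) is strictly increasing on (0,1], strictly decreasing on [1,∞), with maximum d = d(1). Then I_δ(u) does not vanish for δ ∈ (δ₁, δ₂): if there were δ₀ ∈ (δ₁, δ₂) with I_{δ₀}(u) = 0 and ‖∇u‖_p ≠ 0, then J(u) ≥ d(δ₀) > d(δ₁) = J(u), a contradiction. Hence the sign of I_δ(u) is constant on (δ₁, δ₂). -/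
/-- Abstract version of Lemma 2.4: let `d` be strictly increasing on `(0,1]` and
strictly decreasing on `[1,∞)`, let `0 < v < d(1)` with roots `δ₁ < 1 < δ₂` of
`d(δ) = v`, and let `δ ↦ I δ` be continuous with `I δ = 0 → d δ ≤ v` for `δ > 0`.
Then `I` does not vanish on `(δ₁, δ₂)`, and its sign is constant there. -/
theorem stmt_15 (d I : ℝ → ℝ) (v δ₁ δ₂ : ℝ)
    (hmono : StrictMonoOn d (Set.Ioc 0 1)) (hanti : StrictAntiOn d (Set.Ici 1))
    (hv : 0 < v) (hvd : v < d 1)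
    (hδ₁ : 0 < δ₁) (h12 : δ₁ < 1) (h2 : 1 < δ₂)
    (hr1 : d δ₁ = v) (hr2 : d δ₂ = v)
    (hIcont : ContinuousOn I (Set.Ioo δ₁ δ₂))
    (hIzero : ∀ δ : ℝ, 0 < δ → I δ = 0 → d δ ≤ v) :
    (∀ δ ∈ Set.Ioo δ₁ δ₂, I δ ≠ 0) ∧
    ((∀ δ ∈ Set.Ioo δ₁ δ₂, 0 < I δ) ∨ (∀ δ ∈ Set.Ioo δ₁ δ₂, I δ < 0)) := by
  have key : ∀ δ ∈ Set.Ioo δ₁ δ₂, I δ ≠ 0 := by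
    rintro δ ⟨hδl, hδr⟩ hI0
    have hδpos : 0 < δ := hδ₁.trans hδl
    have hle : d δ ≤ v := hIzero δ hδpos hI0
    have hgt : v < d δ := by
      rcases le_or_gt δ 1 with h1 | h1
      · have := hmono ⟨hδ₁, le_of_lt h12⟩ ⟨hδpos, h1⟩ hδl
        linarith [hr1]
      · have := hanti (le_of_lt h1) (le_of_lt (h1.trans hδr))
        have := hanti (le_of_lt h1) (le_of_lt (h1.trans hδr)) hδr
        linarith [hr2]
    linarith
  refine ⟨key, ?_⟩
  by_contra hcon
  push_neg at hcon
  obtain ⟨⟨a, ha, hIa⟩, ⟨b, hb, hIb⟩⟩ := hcon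
  have hIa' : I a < 0 := lt_of_le_of_ne hIa (key a ha)
  have hIb' : 0 < I b := lt_of_le_of_ne hIb (Ne.symm (key b hb))
  obtain ⟨x, hx, hx0⟩ := isPreconnected_Ioo.intermediate_value₂ ha hb hIcont
    continuousOn_const (le_of_lt hIa') (le_of_lt hIb')
  exact key x hx hx0
end

section
/- Let u ∈ W_0^{1,p}(Ω) lie on the Nehari manifold, i.e. a‖∇u‖_p^p + b‖∇u‖_p^{2p} = ∫_Ω |u|^{q+1} log|u| dx and ‖∇u‖_p ≠ 0. Then a‖∇u‖_p^p < ‖u‖_{q+2}^{q+2} ≤ S^{q+2} ‖∇u‖_p^{q+2}, and therefore ‖∇u‖_p ≥ (a/S^{q+2})^{1/(q+2-p)} > 0. In particular the Nehari manifold is bounded away from 0 in W_0^{1,p}(Ω). -/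
open MeasureTheory

/-- If `u` lies on the Nehari manifold, i.e.
`a N^p + b N^{2p} = ∫ |u|^{q+1} log|u|` with `N = ‖∇u‖_p ≠ 0`, and the Sobolev
inequality `‖u‖_{q+2} ≤ S N` holds, then `a N^p < ∫ |u|^{q+2} ≤ S^{q+2} N^{q+2}`,
hence `N ≥ (a/S^{q+2})^{1/(q+2-p)} > 0`. -/
theorem stmt_16 {α : Type*} [MeasurableSpace α] (μ : Measure α) (u : α → ℝ)
    (a b p q S N : ℝ) (ha : 0 < a) (hb : 0 < b) (hp : 2 ≤ p) (hpq : p < q + 2)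
    (hS : 0 < S) (hNnonneg : 0 ≤ N) (hNne : N ≠ 0)
    (hint : Integrable (fun x => |u x| ^ (q + 2)) μ)
    (hintlog : Integrable (fun x => |u x| ^ (q + 1) * Real.log |u x|) μ)
    (hSob : (∫ x, |u x| ^ (q + 2) ∂μ) ^ (1 / (q + 2)) ≤ S * N)
    (hNehari : a * N ^ p + b * N ^ (2 * p)
      = ∫ x, |u x| ^ (q + 1) * Real.log |u x| ∂μ) :
    a * N ^ p < (∫ x, |u x| ^ (q + 2) ∂μ) ∧
    (∫ x, |u x| ^ (q + 2) ∂μ) ≤ S ^ (q + 2) * N ^ (q + 2) ∧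
    (a / S ^ (q + 2)) ^ (1 / (q + 2 - p)) ≤ N ∧
    0 < (a / S ^ (q + 2)) ^ (1 / (q + 2 - p)) := by
  have hN : 0 < N := lt_of_le_of_ne hNnonneg (Ne.symm hNne)
  have hq2 : (0:ℝ) < q + 2 := by linarith
  have hq1 : (0:ℝ) < q + 1 := by linarith
  set I := ∫ x, |u x| ^ (q + 2) ∂μ with hI
  -- pointwise bound
  have hpt : ∀ x, |u x| ^ (q + 1) * Real.log |u x| ≤ |u x| ^ (q + 2) := by
    intro x
    set t := |u x| with htdef
    have ht : 0 ≤ t := abs_nonneg _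
    rcases eq_or_lt_of_le ht with h0 | h0
    · rw [← h0, Real.zero_rpow hq1.ne', Real.zero_rpow hq2.ne', Real.log_zero]
      simp
    · have hlog : Real.log t ≤ t := Real.log_le_self ht
      calc t ^ (q + 1) * Real.log t ≤ t ^ (q + 1) * t := by
            exact mul_le_mul_of_nonneg_left hlog (Real.rpow_nonneg ht _)
        _ = t ^ (q + 2) := by
            have : t ^ (q + 2) = t ^ (q + 1) * t := by
              rw [show q + 2 = q + 1 + 1 by ring, Real.rpow_add h0, Real.rpow_one]
            rw [this]
  have hIle : (∫ x, |u x| ^ (q + 1) * Real.log |u x| ∂μ) ≤ I :=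
    integral_mono hintlog hint hpt
  have h1 : a * N ^ p < I := by
    have hbN : 0 < b * N ^ (2 * p) := mul_pos hb (Real.rpow_pos_of_pos hN _)
    linarith [hNehari ▸ hIle]
  have hInn : 0 ≤ I := integral_nonneg fun x => Real.rpow_nonneg (abs_nonneg _) _
  have h2 : I ≤ S ^ (q + 2) * N ^ (q + 2) := by
    have := Real.rpow_le_rpow (Real.rpow_nonneg hInn _) hSob hq2.le
    rwa [← Real.rpow_mul hInn, one_div, inv_mul_cancel₀ hq2.ne', Real.rpow_one,
      Real.mul_rpow hS.le hNnonneg] at this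
  have hSq : 0 < S ^ (q + 2) := Real.rpow_pos_of_pos hS _
  have hqp : (0:ℝ) < q + 2 - p := by linarith
  have h3 : (a / S ^ (q + 2)) ^ (1 / (q + 2 - p)) ≤ N := by
    have hNp : 0 < N ^ p := Real.rpow_pos_of_pos hN _
    have hsplit : N ^ (q + 2) = N ^ p * N ^ (q + 2 - p) := by
      rw [← Real.rpow_add hN]; ring_nf
    have hlt : a * N ^ p < S ^ (q + 2) * (N ^ p * N ^ (q + 2 - p)) := by
      calc a * N ^ p < I := h1
        _ ≤ S ^ (q + 2) * N ^ (q + 2) := h2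
        _ = _ := by rw [hsplit]
    have ha' : a < S ^ (q + 2) * N ^ (q + 2 - p) := by
      have := (mul_lt_mul_iff_of_pos_right hNp).mp (by linarith [hlt] :
        a * N ^ p < (S ^ (q + 2) * N ^ (q + 2 - p)) * N ^ p)
      exact this
    have hdiv : a / S ^ (q + 2) ≤ N ^ (q + 2 - p) := by
      rw [div_le_iff₀ hSq]; nlinarith
    have := Real.rpow_le_rpow (by positivity) hdiv (by positivity :
      (0:ℝ) ≤ 1 / (q + 2 - p))
    rwa [← Real.rpow_mul hN.le, mul_one_div, div_self hqp.ne', Real.rpow_one] at this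
  refine ⟨h1, h2, h3, by positivity⟩
end
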